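/- arXiv:2107.05045 — 4 statements merged into one kernel-verified Lean document; each statement's English description precedes it below -/
import Mathlib

section
/- Let f : [0,∞) → ℝ be twice differentiable and μ-strongly convex (i.e., inf_t f''(t) = μ > 0). For any π ∈ (0,1), c ∈ (0,1), and any r : ℝ^d → [0,∞), the classifier h_c = sign(πr − c) satisfies R_{π,c}(h_c) − R*_{π,c} ≤ π √( (2/μ) B_f(r* ∥ r) ), where r*(x) = p_+(x)/p(x). -/
open MeasureTheory Real

/-! With `η = pr * r*` the posterior `P(Y = +1 | x)`, the cost-sensitive risk of a measurable `g`
is `∫ condRisk c (η x) (g x) dP`. Hence the Bayes risk is at least `∫ min((1 - c) η, c (1 - η)) dP`,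
while the plug-in rule `sgn (pr r - c)` exceeds that minimum by at most `|η - pr r|` pointwise,
so the excess risk is at most `pr ‖r* - r‖₁ ≤ pr ‖r* - r‖₂`. Finally `μ`-strong convexity of `f`
on `[0, ∞)` bounds the pointwise Bregman gap below by `μ / 2 (r* - r)²`. -/

/-- The sign function mapping to `{±1}`. -/
noncomputable def sgn (x : ℝ) : ℝ := if 0 < x then 1 else -1

/-- Cost-sensitive classification risk with class-prior `pr` and false-positive cost `c`,
for class-conditional distributions `Pp` (positive) and `Pm` (negative). -/
noncomputable def costRisk {d : ℕ} (Pp Pm : Measure (Fin d → ℝ)) (pr c : ℝ)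
    (g : (Fin d → ℝ) → ℝ) : ℝ :=
  (1 - c) * pr * (Pp {x | sgn (g x) ≠ 1}).toReal
    + c * (1 - pr) * (Pm {x | sgn (g x) ≠ -1}).toReal

/-- Bayes-optimal cost-sensitive risk: infimum over all measurable decision functions. -/
noncomputable def bayesRisk {d : ℕ} (Pp Pm : Measure (Fin d → ℝ)) (pr c : ℝ) : ℝ :=
  ⨅ g : {g : (Fin d → ℝ) → ℝ // Measurable g}, costRisk Pp Pm pr c g.1

/-- Bregman divergence `B_f(r* ∥ r)` weighted by the distribution `P`. -/
noncomputable def bregman {d : ℕ} (P : Measure (Fin d → ℝ)) (f : ℝ → ℝ)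
    (rstar r : (Fin d → ℝ) → ℝ) : ℝ :=
  ∫ x, (f (rstar x) - f (r x) - deriv f (r x) * (rstar x - r x)) ∂P

lemma sgn_ne_one_iff {y : ℝ} : sgn y ≠ 1 ↔ y ≤ 0 := by
  unfold sgn; split_ifs with h
  · simpa using h
  · norm_num [not_lt.1 h]

lemma sgn_ne_neg_one_iff {y : ℝ} : sgn y ≠ -1 ↔ 0 < y := by
  unfold sgn; split_ifs with h
  · norm_num [h]
  · simpa using h

lemma half_mul_sq_sub_le_of_le_deriv_deriv {f : ℝ → ℝ} {μ : ℝ} {D : Set ℝ} (hD : Convex ℝ D)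
    (hf : ContDiff ℝ 2 f) (hsc : ∀ t ∈ D, μ ≤ deriv (deriv f) t) {s t : ℝ}
    (hs : s ∈ D) (ht : t ∈ D) :
    μ / 2 * (s - t) ^ 2 ≤ f s - f t - deriv f t * (s - t) := by
  have hf1 : Differentiable ℝ f := hf.differentiable (by norm_num)
  have hf2 : Differentiable ℝ (deriv f) :=
    (contDiff_succ_iff_deriv (n := 1)).1 hf |>.2.2.differentiable (by norm_num)
  set g : ℝ → ℝ := fun u => f u - μ / 2 * u ^ 2
  have hg : ∀ u, HasDerivAt g (deriv f u - μ * u) u := fun u =>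
    ((hf1 u).hasDerivAt.sub ((hasDerivAt_pow 2 u).const_mul (μ / 2))).congr_deriv (by ring)
  have hg' : deriv g = fun u => deriv f u - μ * u := funext fun u => (hg u).deriv
  have hg'' : ∀ u, HasDerivAt (deriv g) (deriv (deriv f) u - μ) u := fun u => by
    rw [hg']
    exact ((hf2 u).hasDerivAt.sub ((hasDerivAt_id u).const_mul μ)).congr_deriv (by ring)
  -- `f - μ t² / 2` is convex, and the claim is its tangent-line inequality at `t`.
  have hconv : ConvexOn ℝ D g :=
    convexOn_of_deriv2_nonneg hD (fun u _ => (hg u).continuousAt.continuousWithinAt)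
      (fun u _ => (hg u).differentiableAt.differentiableWithinAt)
      (fun u _ => (hg'' u).differentiableAt.differentiableWithinAt)
      (fun u hu => by
        rw [Function.iterate_succ_apply, Function.iterate_one, (hg'' u).deriv]
        linarith [hsc u (interior_subset hu)])
  rcases lt_trichotomy t s with hts | rfl | hst
  · have := hconv.deriv_le_slope ht hs hts (hg t).differentiableAt
    rw [(hg t).deriv, slope_def_field, le_div_iff₀ (sub_pos.2 hts)] at this
    simp only [g] at this
    nlinarith
  · simp
  · have := hconv.slope_le_deriv hs ht hst (hg t).differentiableAt
    rw [(hg t).deriv, slope_def_field, div_le_iff₀ (sub_pos.2 hst)] at this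
    simp only [g] at this
    nlinarith

lemma integral_abs_le_sqrt_integral_sq {α : Type*} [MeasurableSpace α] {P : Measure α}
    [IsProbabilityMeasure P] {u : α → ℝ} (hu : MemLp u 2 P) :
    ∫ x, |u x| ∂P ≤ √(∫ x, u x ^ 2 ∂P) := by
  -- Cauchy–Schwarz in the form `0 ≤ Var |u| = E[u²] - (E|u|)²`.
  have hvar := ProbabilityTheory.variance_nonneg |u| P
  rw [ProbabilityTheory.variance_eq_sub hu.abs] at hvar
  exact Real.le_sqrt_of_sq_le (by simpa [sq_abs] using hvar)

section ClassConditional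

variable {α : Type*} [MeasurableSpace α] {Pp Pm P : Measure α} {pr : ℝ} {rstar : α → ℝ}

lemma integrable_of_toReal_eq_setIntegral [IsProbabilityMeasure Pp]
    (hratio : ∀ S, MeasurableSet S → (Pp S).toReal = ∫ x in S, rstar x ∂P) :
    Integrable rstar P := by
  by_contra h
  simpa [integral_undef h] using hratio Set.univ .univ

lemma one_sub_mul_toReal_eq_setIntegral [IsFiniteMeasure P] (hpr0 : 0 ≤ pr) (hpr1 : pr ≤ 1)
    (hmix : P = ENNReal.ofReal pr • Pp + ENNReal.ofReal (1 - pr) • Pm)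
    (hratio : ∀ S, MeasurableSet S → (Pp S).toReal = ∫ x in S, rstar x ∂P)
    (hint : Integrable rstar P) {S : Set α} (hS : MeasurableSet S) :
    (1 - pr) * (Pm S).toReal = ∫ x in S, (1 - pr * rstar x) ∂P := by
  have hPS : P S = ENNReal.ofReal pr * Pp S + ENNReal.ofReal (1 - pr) * Pm S := by
    rw [hmix]; rfl
  have hfin : ENNReal.ofReal pr * Pp S + ENNReal.ofReal (1 - pr) * Pm S ≠ ⊤ :=
    hPS ▸ measure_ne_top P S
  have hPS' : (P S).toReal = pr * (Pp S).toReal + (1 - pr) * (Pm S).toReal := by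
    rw [hPS, ENNReal.toReal_add (ENNReal.add_ne_top.1 hfin).1 (ENNReal.add_ne_top.1 hfin).2,
      ENNReal.toReal_mul, ENNReal.toReal_mul, ENNReal.toReal_ofReal hpr0,
      ENNReal.toReal_ofReal (sub_nonneg.2 hpr1)]
  rw [integral_sub (integrable_const 1) (hint.restrict.const_mul pr), integral_const_mul,
    setIntegral_const, ← hratio S hS, smul_eq_mul, mul_one, measureReal_def, hPS']
  ring

end ClassConditional

/-- Conditional risk of the decision `sgn y` at a point where `P(Y = +1 | x) = η`. -/
noncomputable def condRisk (c η y : ℝ) : ℝ := if y ≤ 0 then (1 - c) * η else c * (1 - η)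

lemma min_le_condRisk (c η y : ℝ) : min ((1 - c) * η) (c * (1 - η)) ≤ condRisk c η y := by
  unfold condRisk
  split_ifs
  exacts [min_le_left _ _, min_le_right _ _]

lemma condRisk_sub_le (c η a : ℝ) :
    condRisk c η (a - c) ≤ min ((1 - c) * η) (c * (1 - η)) + |η - a| := by
  unfold condRisk
  split_ifs <;> cases min_cases ((1 - c) * η) (c * (1 - η)) <;>
    cases abs_cases (η - a) <;> linarith

open Classical in
lemma condRisk_comp_eq_piecewise {α : Type*} (c : ℝ) (η g : α → ℝ) :
    (fun x => condRisk c (η x) (g x))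
      = {x | g x ≤ 0}.piecewise (fun x => (1 - c) * η x) (fun x => c * (1 - η x)) := by
  ext x
  simp only [condRisk, Set.piecewise, Set.mem_ofPred_eq]

lemma integrable_condRisk {α : Type*} [MeasurableSpace α] {P : Measure α} [IsFiniteMeasure P]
    {η g : α → ℝ} (c : ℝ) (hη : Integrable η P) (hg : Measurable g) :
    Integrable (fun x => condRisk c (η x) (g x)) P := by
  classical
  rw [condRisk_comp_eq_piecewise]
  exact .piecewise (measurableSet_le hg measurable_const) (hη.const_mul _).integrableOn
    (((integrable_const 1).sub hη).const_mul c).integrableOn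

section Risk

variable {d : ℕ} {Pp Pm P : Measure (Fin d → ℝ)} {pr c : ℝ} {rstar : (Fin d → ℝ) → ℝ}

lemma costRisk_eq_integral_condRisk [IsFiniteMeasure P] (hpr0 : 0 ≤ pr) (hpr1 : pr ≤ 1)
    (hmix : P = ENNReal.ofReal pr • Pp + ENNReal.ofReal (1 - pr) • Pm)
    (hratio : ∀ S, MeasurableSet S → (Pp S).toReal = ∫ x in S, rstar x ∂P)
    (hint : Integrable rstar P) {g : (Fin d → ℝ) → ℝ} (hg : Measurable g) :
    costRisk Pp Pm pr c g = ∫ x, condRisk c (pr * rstar x) (g x) ∂P := by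
  classical
  have hs : MeasurableSet {x | g x ≤ 0} := measurableSet_le hg measurable_const
  have hcompl : {x | 0 < g x} = {x | g x ≤ 0}ᶜ := by ext; simp
  have hA : Integrable (fun x => (1 - c) * (pr * rstar x)) P := (hint.const_mul pr).const_mul _
  have hB : Integrable (fun x => c * (1 - pr * rstar x)) P :=
    ((integrable_const 1).sub (hint.const_mul pr)).const_mul c
  rw [condRisk_comp_eq_piecewise, integral_piecewise hs hA.integrableOn hB.integrableOn]
  simp only [costRisk, sgn_ne_one_iff, sgn_ne_neg_one_iff]
  rw [hcompl, hratio _ hs, mul_assoc c, one_sub_mul_toReal_eq_setIntegral hpr0 hpr1 hmix hratio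
    hint hs.compl, mul_assoc (1 - c), ← integral_const_mul, ← integral_const_mul,
    ← integral_const_mul]

lemma integral_min_le_bayesRisk [IsFiniteMeasure P] (hpr0 : 0 ≤ pr) (hpr1 : pr ≤ 1)
    (hmix : P = ENNReal.ofReal pr • Pp + ENNReal.ofReal (1 - pr) • Pm)
    (hratio : ∀ S, MeasurableSet S → (Pp S).toReal = ∫ x in S, rstar x ∂P)
    (hint : Integrable rstar P) :
    ∫ x, min ((1 - c) * (pr * rstar x)) (c * (1 - pr * rstar x)) ∂P ≤ bayesRisk Pp Pm pr c := by
  have hη : Integrable (fun x => pr * rstar x) P := hint.const_mul pr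
  have : Nonempty {g : (Fin d → ℝ) → ℝ // Measurable g} := ⟨⟨0, measurable_const⟩⟩
  refine le_ciInf fun ⟨g, hg⟩ => ?_
  rw [costRisk_eq_integral_condRisk hpr0 hpr1 hmix hratio hint hg]
  exact integral_mono ((hη.const_mul _).inf ((integrable_const 1).sub hη |>.const_mul c))
    (integrable_condRisk c hη hg) fun x => min_le_condRisk _ _ _

lemma costRisk_sub_bayesRisk_le [IsFiniteMeasure P] (hpr0 : 0 ≤ pr) (hpr1 : pr ≤ 1)
    (hmix : P = ENNReal.ofReal pr • Pp + ENNReal.ofReal (1 - pr) • Pm)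
    (hratio : ∀ S, MeasurableSet S → (Pp S).toReal = ∫ x in S, rstar x ∂P)
    (hint : Integrable rstar P) {r : (Fin d → ℝ) → ℝ} (hr : Measurable r)
    (hdiff : Integrable (fun x => rstar x - r x) P) :
    costRisk Pp Pm pr c (fun x => pr * r x - c) - bayesRisk Pp Pm pr c
      ≤ pr * ∫ x, |rstar x - r x| ∂P := by
  have hη : Integrable (fun x => pr * rstar x) P := hint.const_mul pr
  have hmin : Integrable (fun x => min ((1 - c) * (pr * rstar x)) (c * (1 - pr * rstar x))) P :=
    (hη.const_mul _).inf ((integrable_const 1).sub hη |>.const_mul c)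
  have hplugIn : costRisk Pp Pm pr c (fun x => pr * r x - c)
      ≤ ∫ x, (min ((1 - c) * (pr * rstar x)) (c * (1 - pr * rstar x))
        + pr * |rstar x - r x|) ∂P := by
    rw [costRisk_eq_integral_condRisk hpr0 hpr1 hmix hratio hint (by fun_prop)]
    refine integral_mono (integrable_condRisk c hη (by fun_prop))
      (hmin.add (hdiff.abs.const_mul pr)) fun x => ?_
    have := condRisk_sub_le c (pr * rstar x) (pr * r x)
    rwa [← mul_sub, abs_mul, abs_of_nonneg hpr0] at this
  rw [integral_add hmin (hdiff.abs.const_mul pr), integral_const_mul] at hplugIn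
  linarith [integral_min_le_bayesRisk (c := c) hpr0 hpr1 hmix hratio hint]

end Risk

theorem excess_risk_bregman_bound_general {d : ℕ} (Pp Pm P : Measure (Fin d → ℝ))
    [IsProbabilityMeasure Pp] [IsProbabilityMeasure P]
    (pr c μ : ℝ) (hpr : pr ∈ Set.Ioo (0:ℝ) 1) (hμ : 0 < μ)
    (f : ℝ → ℝ) (hf : ContDiff ℝ 2 f)
    (hsc : ∀ t, 0 ≤ t → μ ≤ deriv (deriv f) t)
    (rstar r : (Fin d → ℝ) → ℝ) (hrstar : Measurable rstar) (hr : Measurable r)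
    (hrstar0 : ∀ x, 0 ≤ rstar x) (hr0 : ∀ x, 0 ≤ r x)
    (hmix : P = ENNReal.ofReal pr • Pp + ENNReal.ofReal (1 - pr) • Pm)
    (hratio : ∀ S : Set (Fin d → ℝ), MeasurableSet S →
      (Pp S).toReal = ∫ x in S, rstar x ∂P)
    (hint : Integrable
      (fun x => f (rstar x) - f (r x) - deriv f (r x) * (rstar x - r x)) P) :
    costRisk Pp Pm pr c (fun x => pr * r x - c) - bayesRisk Pp Pm pr c
      ≤ pr * Real.sqrt ((2 / μ) * bregman P f rstar r) := by
  have hsq : ∀ x, (rstar x - r x) ^ 2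
      ≤ 2 / μ * (f (rstar x) - f (r x) - deriv f (r x) * (rstar x - r x)) := fun x => by
    have := half_mul_sq_sub_le_of_le_deriv_deriv (convex_Ici 0) hf hsc (hrstar0 x) (hr0 x)
    rw [div_mul_eq_mul_div, le_div_iff₀ hμ]
    linarith
  have hu : MemLp (fun x => rstar x - r x) 2 P :=
    (memLp_two_iff_integrable_sq (by fun_prop)).2
      ((hint.const_mul _).mono' (by fun_prop) (.of_forall fun x => by simpa using hsq x))
  calc costRisk Pp Pm pr c (fun x => pr * r x - c) - bayesRisk Pp Pm pr c
      ≤ pr * ∫ x, |rstar x - r x| ∂P :=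
        costRisk_sub_bayesRisk_le hpr.1.le hpr.2.le hmix hratio
          (integrable_of_toReal_eq_setIntegral hratio) hr (hu.integrable one_le_two)
    _ ≤ pr * √(∫ x, (rstar x - r x) ^ 2 ∂P) :=
        mul_le_mul_of_nonneg_left (integral_abs_le_sqrt_integral_sq hu) hpr.1.le
    _ ≤ pr * √(2 / μ * bregman P f rstar r) := by
        rw [bregman, ← integral_const_mul]
        exact mul_le_mul_of_nonneg_left
          (Real.sqrt_le_sqrt (integral_mono hu.integrable_sq (hint.const_mul _) hsq)) hpr.1.le

/-- excess cost-sensitive risk bounded by Bregman divergence of DRE. -/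
theorem excess_risk_bregman_bound {d : ℕ} (Pp Pm P : Measure (Fin d → ℝ))
    [IsProbabilityMeasure Pp] [IsProbabilityMeasure Pm] [IsProbabilityMeasure P]
    (pr c μ : ℝ) (hpr : pr ∈ Set.Ioo (0:ℝ) 1) (hc : c ∈ Set.Ioo (0:ℝ) 1) (hμ : 0 < μ)
    (f : ℝ → ℝ) (hf : ContDiff ℝ 2 f)
    (hsc : ∀ t, 0 ≤ t → μ ≤ deriv (deriv f) t)
    (rstar r : (Fin d → ℝ) → ℝ) (hrstar : Measurable rstar) (hr : Measurable r)
    (hrstar0 : ∀ x, 0 ≤ rstar x) (hr0 : ∀ x, 0 ≤ r x)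
    (hmix : P = ENNReal.ofReal pr • Pp + ENNReal.ofReal (1 - pr) • Pm)
    (hratio : ∀ S : Set (Fin d → ℝ), MeasurableSet S →
      (Pp S).toReal = ∫ x in S, rstar x ∂P)
    (hint : Integrable
      (fun x => f (rstar x) - f (r x) - deriv f (r x) * (rstar x - r x)) P) :
    costRisk Pp Pm pr c (fun x => pr * r x - c) - bayesRisk Pp Pm pr c
      ≤ pr * Real.sqrt ((2 / μ) * bregman P f rstar r) :=
  excess_risk_bregman_bound_general Pp Pm P pr c μ hpr hμ f hf hsc rstar r hrstar hr hrstar0 hr0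
    hmix hratio hint
end

section
/- The normalization identity for the cost-sensitive threshold: with c₀ = c′π(1−π′) / ( (1−c′)(1−π)π′ + c′π(1−π′) ), for every measurable g it holds that R_{π,c₀}(g) / ( (1−c₀)π + c₀(1−π) ) = R_{π′,c′}(g) / ( (1−c′)π′ + c′(1−π′) ). -/
open MeasureTheory Real

/-- normalization identity for the cost-sensitive threshold `c₀`. -/
theorem cost_normalization_identity {d : ℕ} (Pp Pm : Measure (Fin d → ℝ))
    [IsProbabilityMeasure Pp] [IsProbabilityMeasure Pm]
    (pr pr' c' c0 : ℝ) (hpr : pr ∈ Set.Ioo (0:ℝ) 1) (hpr' : pr' ∈ Set.Ioo (0:ℝ) 1)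
    (hc' : c' ∈ Set.Ioo (0:ℝ) 1)
    (hc0 : c0 = c' * pr * (1 - pr') / ((1 - c') * (1 - pr) * pr' + c' * pr * (1 - pr')))
    (g : (Fin d → ℝ) → ℝ) (hg : Measurable g) :
    costRisk Pp Pm pr c0 g / ((1 - c0) * pr + c0 * (1 - pr))
      = costRisk Pp Pm pr' c' g / ((1 - c') * pr' + c' * (1 - pr')) := by
  obtain ⟨hp1, hp2⟩ := hpr
  obtain ⟨hq1, hq2⟩ := hpr'
  obtain ⟨hc1, hc2⟩ := hc'
  have h1c' : (0:ℝ) < 1 - c' := by linarith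
  have h1pr : (0:ℝ) < 1 - pr := by linarith
  have h1pr' : (0:ℝ) < 1 - pr' := by linarith
  have hD : (0:ℝ) < (1 - c') * (1 - pr) * pr' + c' * pr * (1 - pr') :=
    add_pos (mul_pos (mul_pos h1c' h1pr) hq1) (mul_pos (mul_pos hc1 hp1) h1pr')
  have hden2 : (0:ℝ) < (1 - c') * pr' + c' * (1 - pr') :=
    add_pos (mul_pos h1c' hq1) (mul_pos hc1 h1pr')
  subst hc0
  have hden1 : (1 - c' * pr * (1 - pr') / ((1 - c') * (1 - pr) * pr' + c' * pr * (1 - pr'))) * pr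
      + c' * pr * (1 - pr') / ((1 - c') * (1 - pr) * pr' + c' * pr * (1 - pr')) * (1 - pr)
      = ((1 - c') * pr' + c' * (1 - pr')) * (pr * (1 - pr))
        / ((1 - c') * (1 - pr) * pr' + c' * pr * (1 - pr')) := by
    field_simp
    ring
  unfold costRisk
  rw [hden1]
  have h3 : (0:ℝ) < pr * (1 - pr) := mul_pos hp1 h1pr
  field_simp
  ring
end

section
/- If πr(X) ≤ 1 almost surely (i.e., r bounded above by 1/π), then the quadratic Bregman divergence equals the squared-loss excess risk up to scaling: (2π²/μ) B_{f_S}(r* ∥ r) = R_sq(2πr − 1) − R*_sq. -/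
open MeasureTheory Real

/-- Squared-loss classification risk with class-prior `pr`. -/
noncomputable def sqRisk {d : ℕ} (Pp Pm : Measure (Fin d → ℝ)) (pr : ℝ)
    (g : (Fin d → ℝ) → ℝ) : ℝ :=
  pr * ∫ x, (g x - 1) ^ 2 / 4 ∂Pp + (1 - pr) * ∫ x, (g x + 1) ^ 2 / 4 ∂Pm

/-!
Since `P = π P₊ + (1 - π) P₋` and `P₊ = r* P`, the posterior of the positive class is
`η = π r*`, and the squared-loss risk of `2a - 1` is `E_P[η (a - 1)² + (1 - η) a²]`.
Pointwise `η (a - 1)² + (1 - η) a² = (a - η)² + η (1 - η)`, so the excess risk over the Bayes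
classifier `2η - 1` is `E_P[(a - η)²]`; for `a = π r` this is `π² E_P[(r* - r)²]`, which is
`2π²/μ` times the quadratic Bregman divergence. The bounds `0 ≤ π r, π r* ≤ 1` (the second forced
by `π P₊ ≤ P`) keep every integrand bounded.
-/

section Mixture

variable {α : Type*} [MeasurableSpace α] {P P₁ P₀ : Measure α} {p : ℝ} {w h h₁ h₀ : α → ℝ}

theorem integral_eq_add_of_mixture
    (hmix : P = ENNReal.ofReal p • P₁ + ENNReal.ofReal (1 - p) • P₀) (hp0 : 0 ≤ p) (hp1 : p ≤ 1)
    (hint₁ : Integrable h P₁) (hint₀ : Integrable h P₀) :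
    ∫ x, h x ∂P = p * ∫ x, h x ∂P₁ + (1 - p) * ∫ x, h x ∂P₀ := by
  rw [hmix, integral_add_measure (hint₁.smul_measure ENNReal.ofReal_ne_top)
      (hint₀.smul_measure ENNReal.ofReal_ne_top), integral_smul_measure, integral_smul_measure,
    ENNReal.toReal_ofReal hp0, ENNReal.toReal_ofReal (sub_nonneg.2 hp1), smul_eq_mul, smul_eq_mul]

theorem MeasureTheory.Integrable.of_mixture
    (hmix : P = ENNReal.ofReal p • P₁ + ENNReal.ofReal (1 - p) • P₀) (hp : p ∈ Set.Ioo 0 1)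
    (hh : Integrable h P) : Integrable h P₁ ∧ Integrable h P₀ := by
  rwa [hmix, integrable_add_measure,
    integrable_smul_measure (by simpa using hp.1) ENNReal.ofReal_ne_top,
    integrable_smul_measure (by simpa using hp.2) ENNReal.ofReal_ne_top] at hh

theorem integral_withDensity_ofReal (hw : Measurable w) (hw0 : ∀ x, 0 ≤ w x) (h : α → ℝ) :
    ∫ x, h x ∂P.withDensity (fun x => ENNReal.ofReal (w x)) = ∫ x, w x * h x ∂P := by
  rw [integral_withDensity_eq_integral_toReal_smul (by fun_prop)
    (ae_of_all _ fun _ => ENNReal.ofReal_lt_top)]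
  simp only [ENNReal.toReal_ofReal (hw0 _), smul_eq_mul]

theorem integrable_withDensity_ofReal_iff (hw : Measurable w) (hw0 : ∀ x, 0 ≤ w x) :
    Integrable h (P.withDensity fun x => ENNReal.ofReal (w x)) ↔
      Integrable (fun x => w x * h x) P := by
  rw [integrable_withDensity_iff_integrable_smul' (by fun_prop)
    (ae_of_all _ fun _ => ENNReal.ofReal_lt_top)]
  simp only [ENNReal.toReal_ofReal (hw0 _), smul_eq_mul]

theorem integrable_of_forall_setIntegral_eq [IsFiniteMeasure P₁] [NeZero P₁]
    (hdens : ∀ S, MeasurableSet S → (P₁ S).toReal = ∫ x in S, w x ∂P) : Integrable w P := by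
  by_contra hw
  have := hdens Set.univ MeasurableSet.univ
  rw [Measure.restrict_univ, integral_undef hw, ENNReal.toReal_eq_zero_iff] at this
  simp only [measure_ne_top, or_false, Measure.measure_univ_eq_zero] at this
  exact NeZero.ne P₁ this

theorem eq_withDensity_of_forall_setIntegral_eq [IsFiniteMeasure P₁] (hw0 : ∀ x, 0 ≤ w x)
    (hw : Integrable w P) (hdens : ∀ S, MeasurableSet S → (P₁ S).toReal = ∫ x in S, w x ∂P) :
    P₁ = P.withDensity fun x => ENNReal.ofReal (w x) := by
  ext S hS
  rw [withDensity_apply _ hS, ← ofReal_integral_eq_lintegral_ofReal hw.integrableOn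
    (ae_of_all _ fun x => hw0 x), ← hdens S hS, ENNReal.ofReal_toReal (measure_ne_top _ _)]

theorem ae_mul_le_one_of_mixture [IsFiniteMeasure P] [IsFiniteMeasure P₁] [IsFiniteMeasure P₀]
    (hmix : P = ENNReal.ofReal p • P₁ + ENNReal.ofReal (1 - p) • P₀) (hp0 : 0 ≤ p) (hp1 : p ≤ 1)
    (hw : Integrable w P) (hdens : ∀ S, MeasurableSet S → (P₁ S).toReal = ∫ x in S, w x ∂P) :
    ∀ᵐ x ∂P, p * w x ≤ 1 := by
  refine ae_le_of_forall_setIntegral_le (hw.const_mul p) (integrable_const 1) fun S hS _ => ?_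
  have hsplit := integral_eq_add_of_mixture hmix hp0 hp1
    ((integrable_const (1 : ℝ)).indicator hS) ((integrable_const (1 : ℝ)).indicator hS)
  simp only [integral_indicator_const _ hS, smul_eq_mul, mul_one] at hsplit
  rw [integral_const_mul, ← hdens S hS, setIntegral_const, smul_eq_mul, mul_one, hsplit,
    measureReal_def]
  nlinarith [measureReal_nonneg (μ := P₀) (s := S)]

theorem mul_integral_add_mul_integral_eq_of_mixture
    (hmix : P = ENNReal.ofReal p • P₁ + ENNReal.ofReal (1 - p) • P₀) (hp : p ∈ Set.Ioo 0 1)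
    (hw : Measurable w) (hw0 : ∀ x, 0 ≤ w x)
    (hP₁ : P₁ = P.withDensity fun x => ENNReal.ofReal (w x))
    (hh₁ : Integrable h₁ P₁) (hh₀ : Integrable h₀ P) :
    p * ∫ x, h₁ x ∂P₁ + (1 - p) * ∫ x, h₀ x ∂P₀
      = ∫ x, (p * w x * h₁ x + (1 - p * w x) * h₀ x) ∂P := by
  obtain ⟨hh₀₁, hh₀₀⟩ := hh₀.of_mixture hmix hp
  have hP₀ : (1 - p) * ∫ x, h₀ x ∂P₀ = ∫ x, h₀ x ∂P - p * ∫ x, h₀ x ∂P₁ := by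
    rw [integral_eq_add_of_mixture hmix hp.1.le hp.2.le hh₀₁ hh₀₀]; ring
  rw [hP₀, hP₁, integral_withDensity_ofReal hw hw0, integral_withDensity_ofReal hw hw0]
  rw [hP₁, integrable_withDensity_ofReal_iff hw hw0] at hh₁ hh₀₁
  rw [← integral_const_mul, ← integral_const_mul, ← integral_sub hh₀ (hh₀₁.const_mul p),
    ← integral_add (g := fun x => h₀ x - p * (w x * h₀ x)) (hh₁.const_mul p)
      (hh₀.sub (hh₀₁.const_mul p))]
  exact integral_congr_ae (ae_of_all _ fun x => by ring)

theorem MeasureTheory.MemLp.of_ae_nonneg_of_ae_le_one [IsFiniteMeasure P] {q : ENNReal}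
    (hh : AEStronglyMeasurable h P) (h0 : ∀ᵐ x ∂P, 0 ≤ h x) (h1 : ∀ᵐ x ∂P, h x ≤ 1) :
    MemLp h q P :=
  MemLp.of_bound hh 1 <| by
    filter_upwards [h0, h1] with x hx0 hx1
    rwa [Real.norm_eq_abs, abs_of_nonneg hx0]

end Mixture

theorem bregman_quadratic {d : ℕ} (P : Measure (Fin d → ℝ)) (μ : ℝ) (rstar r : (Fin d → ℝ) → ℝ) :
    bregman P (fun t => μ * t ^ 2 / 2) rstar r = μ / 2 * ∫ x, (rstar x - r x) ^ 2 ∂P := by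
  have hderiv (a : ℝ) : deriv (fun t => μ * t ^ 2 / 2) a = μ * a :=
    (((hasDerivAt_pow 2 a).const_mul μ).div_const 2).deriv.trans (by ring)
  rw [bregman, ← integral_const_mul]
  exact integral_congr_ae (ae_of_all _ fun x => by simp only [hderiv]; ring)

theorem sqRisk_two_mul_sub_one {d : ℕ} (Pp Pm : Measure (Fin d → ℝ)) (pr : ℝ)
    (a : (Fin d → ℝ) → ℝ) :
    sqRisk Pp Pm pr (fun x => 2 * a x - 1)
      = pr * ∫ x, (a x - 1) ^ 2 ∂Pp + (1 - pr) * ∫ x, a x ^ 2 ∂Pm := by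
  simp only [sqRisk]
  congr 2 <;> exact integral_congr_ae (ae_of_all _ fun x => by ring)

theorem sqRisk_sub_sqRisk_eq_integral_sq {d : ℕ} {Pp Pm P : Measure (Fin d → ℝ)}
    [IsFiniteMeasure P] {pr : ℝ} {w a : (Fin d → ℝ) → ℝ} (hpr : pr ∈ Set.Ioo 0 1)
    (hmix : P = ENNReal.ofReal pr • Pp + ENNReal.ofReal (1 - pr) • Pm)
    (hw : Measurable w) (hw0 : ∀ x, 0 ≤ w x)
    (hPp : Pp = P.withDensity fun x => ENNReal.ofReal (w x))
    (ha : MemLp a 2 P) (hη : MemLp (fun x => pr * w x) 2 P) :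
    sqRisk Pp Pm pr (fun x => 2 * a x - 1) - sqRisk Pp Pm pr (fun x => 2 * (pr * w x) - 1)
      = ∫ x, (a x - pr * w x) ^ 2 ∂P := by
  have hsq {b : (Fin d → ℝ) → ℝ} (hb : MemLp b 2 P) :
      Integrable (fun x => (b x - 1) ^ 2) Pp ∧ Integrable (fun x => b x ^ 2) Pm :=
    ⟨((hb.sub (memLp_const 1)).integrable_sq.of_mixture hmix hpr).1,
      (hb.integrable_sq.of_mixture hmix hpr).2⟩
  rw [sqRisk_two_mul_sub_one, sqRisk_two_mul_sub_one]
  calc _ = pr * ∫ x, ((a x - 1) ^ 2 - (pr * w x - 1) ^ 2) ∂Pp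
        + (1 - pr) * ∫ x, (a x ^ 2 - (pr * w x) ^ 2) ∂Pm := by
        rw [integral_sub (hsq ha).1 (hsq hη).1, integral_sub (hsq ha).2 (hsq hη).2]; ring
    _ = ∫ x, (pr * w x * ((a x - 1) ^ 2 - (pr * w x - 1) ^ 2)
          + (1 - pr * w x) * (a x ^ 2 - (pr * w x) ^ 2)) ∂P :=
        mul_integral_add_mul_integral_eq_of_mixture hmix hpr hw hw0 hPp
          ((hsq ha).1.sub (hsq hη).1) (ha.integrable_sq.sub hη.integrable_sq)
    _ = ∫ x, (a x - pr * w x) ^ 2 ∂P := integral_congr_ae (ae_of_all _ fun x => by ring)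

theorem quadratic_bregman_eq_sq_excess_general {d : ℕ} (Pp Pm P : Measure (Fin d → ℝ))
    [IsProbabilityMeasure Pp] [IsProbabilityMeasure Pm] [IsProbabilityMeasure P]
    (pr μ : ℝ) (hpr : pr ∈ Set.Ioo (0:ℝ) 1) (hμ : 0 < μ)
    (rstar r : (Fin d → ℝ) → ℝ) (hrstar : Measurable rstar) (hr : Measurable r)
    (hrstar0 : ∀ x, 0 ≤ rstar x) (hr0 : ∀ x, 0 ≤ r x)
    (hmix : P = ENNReal.ofReal pr • Pp + ENNReal.ofReal (1 - pr) • Pm)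
    (hratio : ∀ S : Set (Fin d → ℝ), MeasurableSet S →
      (Pp S).toReal = ∫ x in S, rstar x ∂P)
    (hbound : ∀ᵐ x ∂P, pr * r x ≤ 1) :
    (2 * pr ^ 2 / μ) * bregman P (fun t => μ * t ^ 2 / 2) rstar r
      = sqRisk Pp Pm pr (fun x => 2 * (pr * r x) - 1)
        - sqRisk Pp Pm pr (fun x => 2 * (pr * rstar x) - 1) := by
  have hrstarP : Integrable rstar P := integrable_of_forall_setIntegral_eq hratio
  have hPp := eq_withDensity_of_forall_setIntegral_eq hrstar0 hrstarP hratio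
  have hbound_star := ae_mul_le_one_of_mixture hmix hpr.1.le hpr.2.le hrstarP hratio
  have hmemLp {f : (Fin d → ℝ) → ℝ} (hf : Measurable f) (hf0 : ∀ x, 0 ≤ f x)
      (hf1 : ∀ᵐ x ∂P, pr * f x ≤ 1) : MemLp (fun x => pr * f x) 2 P :=
    .of_ae_nonneg_of_ae_le_one (by fun_prop) (ae_of_all _ fun x => mul_nonneg hpr.1.le (hf0 x)) hf1
  rw [sqRisk_sub_sqRisk_eq_integral_sq hpr hmix hrstar hrstar0 hPp (hmemLp hr hr0 hbound)
    (hmemLp hrstar hrstar0 hbound_star), bregman_quadratic, ← integral_const_mul,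
    ← integral_const_mul]
  refine integral_congr_ae (ae_of_all _ fun x => ?_)
  field_simp
  ring

/-- when `pr · r ≤ 1` a.s., the quadratic Bregman divergence equals the
squared-loss excess risk up to scaling. -/
theorem quadratic_bregman_eq_sq_excess {d : ℕ} (Pp Pm P : Measure (Fin d → ℝ))
    [IsProbabilityMeasure Pp] [IsProbabilityMeasure Pm] [IsProbabilityMeasure P]
    (pr μ : ℝ) (hpr : pr ∈ Set.Ioo (0:ℝ) 1) (hμ : 0 < μ)
    (rstar r : (Fin d → ℝ) → ℝ) (hrstar : Measurable rstar) (hr : Measurable r)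
    (hrstar0 : ∀ x, 0 ≤ rstar x) (hr0 : ∀ x, 0 ≤ r x)
    (hmix : P = ENNReal.ofReal pr • Pp + ENNReal.ofReal (1 - pr) • Pm)
    (hratio : ∀ S : Set (Fin d → ℝ), MeasurableSet S →
      (Pp S).toReal = ∫ x in S, rstar x ∂P)
    (hint : Integrable (fun x => μ * (rstar x - r x) ^ 2 / 2) P)
    (hbound : ∀ᵐ x ∂P, pr * r x ≤ 1) :
    (2 * pr ^ 2 / μ) * bregman P (fun t => μ * t ^ 2 / 2) rstar r
      = sqRisk Pp Pm pr (fun x => 2 * (pr * r x) - 1)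
        - sqRisk Pp Pm pr (fun x => 2 * (pr * rstar x) - 1) :=
  quadratic_bregman_eq_sq_excess_general Pp Pm P pr μ hpr hμ rstar r hrstar hr hrstar0 hr0 hmix
    hratio hbound
end

section
/- Irreducible mixture proportion identity: if P = πP_+ + (1−π)P_− are probability measures on (ℝ^d, 𝔖) and P_− is irreducible with respect to P_+, then π = max{ κ ∈ [0,1] : ∃ probability measure Q with P = κP_+ + (1−κ)Q } = inf_{S ∈ 𝔖, P_+(S) > 0} P(S)/P_+(S). -/
open MeasureTheory

/-- `G` is irreducible with respect to `H`: there is no decomposition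
`G = κ H + (1 − κ) H'` with `H'` a probability measure and `0 < κ ≤ 1`. -/
def IrreducibleWrt {d : ℕ} (G H : Measure (Fin d → ℝ)) : Prop :=
  ¬ ∃ (κ : ℝ) (H' : Measure (Fin d → ℝ)), 0 < κ ∧ κ ≤ 1 ∧ IsProbabilityMeasure H' ∧
      G = ENNReal.ofReal κ • H + ENNReal.ofReal (1 - κ) • H'

/-!
Irreducibility of `P₋` with respect to `P₊` says that `P₋` dominates no multiple `c • P₊` with
`0 < c ≤ 1`, since such a domination splits off `P₋ = c P₊ + (1 - c) H'`. A mixture proportion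
`κ > π`, or an infimum `t > π` of the ratios `P(S) / P₊(S)`, would give `P ≥ t • P₊` with `t > π`,
hence `(1 - π) P₋ = P - π P₊ ≥ (t - π) P₊`, a forbidden domination. In the other direction
`P ≥ π • P₊` bounds the ratios below by `π`, and `S = ℝ^d` puts `1` among them.
-/

open Set

section Mixture

variable {α : Type*} [MeasurableSpace α]

theorem toReal_apply_of_eq_mixture {μ ν ρ : Measure α} [IsFiniteMeasure ν] [IsFiniteMeasure ρ]
    {x : ℝ} (hx0 : 0 ≤ x) (hx1 : x ≤ 1)
    (h : μ = ENNReal.ofReal x • ν + ENNReal.ofReal (1 - x) • ρ) (s : Set α) :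
    (μ s).toReal = x * (ν s).toReal + (1 - x) * (ρ s).toReal := by
  rw [h, Measure.add_apply, Measure.smul_apply, Measure.smul_apply, smul_eq_mul, smul_eq_mul,
    ENNReal.toReal_add (by finiteness) (by finiteness), ENNReal.toReal_mul, ENNReal.toReal_mul,
    ENNReal.toReal_ofReal hx0, ENNReal.toReal_ofReal (sub_nonneg.2 hx1)]

theorem mul_toReal_le_of_eq_mixture {μ ν ρ : Measure α} [IsFiniteMeasure ν] [IsFiniteMeasure ρ]
    {x : ℝ} (hx0 : 0 ≤ x) (hx1 : x ≤ 1)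
    (h : μ = ENNReal.ofReal x • ν + ENNReal.ofReal (1 - x) • ρ) (s : Set α) :
    x * (ν s).toReal ≤ (μ s).toReal := by
  rw [toReal_apply_of_eq_mixture hx0 hx1 h]
  have := mul_nonneg (sub_nonneg.2 hx1) (ENNReal.toReal_nonneg (a := ρ s))
  linarith

theorem Measure.smul_le_of_forall_mul_toReal_le {μ ν : Measure α} [IsFiniteMeasure μ]
    [IsFiniteMeasure ν] {c : ℝ} (hc : 0 ≤ c)
    (h : ∀ s, MeasurableSet s → c * (ν s).toReal ≤ (μ s).toReal) :
    ENNReal.ofReal c • ν ≤ μ := by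
  refine Measure.le_iff.2 fun s hs => ?_
  rw [Measure.smul_apply, smul_eq_mul, ← ENNReal.ofReal_toReal (measure_ne_top ν s),
    ← ENNReal.ofReal_mul hc, ← ENNReal.ofReal_toReal (measure_ne_top μ s)]
  exact ENNReal.ofReal_le_ofReal (h s hs)

theorem exists_eq_mixture_of_smul_le {μ ν : Measure α} [IsProbabilityMeasure μ]
    [IsProbabilityMeasure ν] {κ : ℝ} (hκ0 : 0 ≤ κ) (hκ1 : κ ≤ 1)
    (h : ENNReal.ofReal κ • ν ≤ μ) :
    ∃ ρ : Measure α, IsProbabilityMeasure ρ ∧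
      μ = ENNReal.ofReal κ • ν + ENNReal.ofReal (1 - κ) • ρ := by
  have := ν.smul_finite (ENNReal.ofReal_ne_top (r := κ))
  have hrest : (μ - ENNReal.ofReal κ • ν) univ = ENNReal.ofReal (1 - κ) := by
    rw [Measure.sub_apply .univ h, Measure.smul_apply, smul_eq_mul, measure_univ, measure_univ,
      mul_one, ENNReal.ofReal_sub _ hκ0, ENNReal.ofReal_one]
  suffices ∃ ρ : Measure α, IsProbabilityMeasure ρ ∧
      ENNReal.ofReal (1 - κ) • ρ = μ - ENNReal.ofReal κ • ν by
    obtain ⟨ρ, hρ, hρμ⟩ := this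
    exact ⟨ρ, hρ, by rw [hρμ, add_comm, Measure.sub_add_cancel_of_le h]⟩
  rcases hκ1.eq_or_lt with rfl | hκ1
  · refine ⟨μ, inferInstance, ?_⟩
    rw [sub_self, ENNReal.ofReal_zero, zero_smul, eq_comm, ← Measure.measure_univ_eq_zero, hrest,
      sub_self, ENNReal.ofReal_zero]
  · have hne : ENNReal.ofReal (1 - κ) ≠ 0 := by simpa using hκ1
    refine ⟨(ENNReal.ofReal (1 - κ))⁻¹ • (μ - ENNReal.ofReal κ • ν), ⟨?_⟩, ?_⟩
    · rw [Measure.smul_apply, hrest, smul_eq_mul, ENNReal.inv_mul_cancel hne ENNReal.ofReal_ne_top]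
    · rw [smul_smul, ENNReal.mul_inv_cancel hne ENNReal.ofReal_ne_top, one_smul]

end Mixture

theorem IrreducibleWrt.not_smul_le {d : ℕ} {G H : Measure (Fin d → ℝ)} [IsProbabilityMeasure G]
    [IsProbabilityMeasure H] (hirr : IrreducibleWrt G H) {κ : ℝ} (hκ0 : 0 < κ) (hκ1 : κ ≤ 1) :
    ¬ ENNReal.ofReal κ • H ≤ G := fun h =>
  let ⟨ρ, hρ, hG⟩ := exists_eq_mixture_of_smul_le hκ0.le hκ1 h
  hirr ⟨κ, ρ, hκ0, hκ1, hρ, hG⟩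

theorem IrreducibleWrt.le_of_forall_mul_toReal_le {d : ℕ} {P Pp Pm : Measure (Fin d → ℝ)}
    [IsProbabilityMeasure Pp] [IsProbabilityMeasure Pm] {pr t : ℝ} (hpr0 : 0 ≤ pr)
    (hmix : P = ENNReal.ofReal pr • Pp + ENNReal.ofReal (1 - pr) • Pm)
    (hirr : IrreducibleWrt Pm Pp) (ht1 : t ≤ 1)
    (ht : ∀ s, MeasurableSet s → t * (Pp s).toReal ≤ (P s).toReal) : t ≤ pr := by
  by_contra! hlt
  have h1 : 0 < 1 - pr := by linarith
  have hc : 0 < (t - pr) / (1 - pr) := div_pos (sub_pos.2 hlt) h1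
  refine hirr.not_smul_le hc ((div_le_one h1).2 (by linarith))
    (Measure.smul_le_of_forall_mul_toReal_le hc.le fun s hs => ?_)
  have hs := ht s hs
  rw [toReal_apply_of_eq_mixture hpr0 (by linarith) hmix] at hs
  rw [div_mul_eq_mul_div, div_le_iff₀ h1]
  linarith

/-- under irreducibility, the class-prior is the maximum mixture
proportion and the infimum of `P(S)/P₊(S)`. -/
theorem irreducible_mixture_proportion {d : ℕ} (P Pp Pm : Measure (Fin d → ℝ))
    [IsProbabilityMeasure P] [IsProbabilityMeasure Pp] [IsProbabilityMeasure Pm]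
    (pr : ℝ) (hpr : pr ∈ Set.Icc (0:ℝ) 1)
    (hmix : P = ENNReal.ofReal pr • Pp + ENNReal.ofReal (1 - pr) • Pm)
    (hirr : IrreducibleWrt Pm Pp) :
    IsGreatest {κ : ℝ | κ ∈ Set.Icc (0:ℝ) 1 ∧ ∃ Q : Measure (Fin d → ℝ),
        IsProbabilityMeasure Q ∧
        P = ENNReal.ofReal κ • Pp + ENNReal.ofReal (1 - κ) • Q} pr
      ∧ pr = sInf {t : ℝ | ∃ S : Set (Fin d → ℝ), MeasurableSet S ∧ 0 < Pp S ∧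
          t = (P S).toReal / (Pp S).toReal} := by
  obtain ⟨hpr0, hpr1⟩ := hpr
  set T := {t : ℝ | ∃ S : Set (Fin d → ℝ), MeasurableSet S ∧ 0 < Pp S ∧
    t = (P S).toReal / (Pp S).toReal}
  have hlb : ∀ t ∈ T, pr ≤ t := by
    rintro t ⟨S, -, hS, rfl⟩
    exact (le_div_iff₀ (ENNReal.toReal_pos hS.ne' (measure_ne_top _ _))).2
      (mul_toReal_le_of_eq_mixture hpr0 hpr1 hmix S)
  have h1T : (1 : ℝ) ∈ T := ⟨univ, .univ, by simp, by simp⟩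
  refine ⟨⟨⟨⟨hpr0, hpr1⟩, Pm, inferInstance, hmix⟩, ?_⟩, ?_⟩
  · rintro κ ⟨⟨hκ0, hκ1⟩, Q, hQ, hPQ⟩
    exact hirr.le_of_forall_mul_toReal_le hpr0 hmix hκ1 fun s _ =>
      mul_toReal_le_of_eq_mixture hκ0 hκ1 hPQ s
  · refine le_antisymm (le_csInf ⟨1, h1T⟩ hlb)
      (hirr.le_of_forall_mul_toReal_le hpr0 hmix (csInf_le ⟨pr, hlb⟩ h1T) fun s hs => ?_)
    rcases eq_zero_or_pos (Pp s) with hzero | hpos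
    · simp [hzero]
    · exact (le_div_iff₀ (ENNReal.toReal_pos hpos.ne' (measure_ne_top _ _))).1
        (csInf_le ⟨pr, hlb⟩ ⟨s, hs, hpos, rfl⟩)
end
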